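/- arXiv:2106.01036 — 2 statements merged into one kernel-verified Lean document; each statement's English description precedes it below -/
import Mathlib

section
/- With |P_0| = n, U_i ≤ |P_i| - |P_{i+1}|·(deg_i + 1), P_{ℓ+1} = ∅, and deg_{i+1} = deg_i² for all i < ℓ with deg_i ≥ 1, the total edge count ∑_{i=0}^{ℓ}(|P_i| + |U_i|·(deg_i - 1) - |P_{i+1}|) is at most n·deg_0. -/
theorem stmt_8 (n : ℝ) (hn : 0 < n) (ℓ : ℕ)
    (P U deg : ℕ → ℝ)
    (hPnn : ∀ i, 0 ≤ P i) (hUnn : ∀ i, 0 ≤ U i)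
    (hdeg1 : ∀ i, i ≤ ℓ → 1 ≤ deg i)
    (hP0 : P 0 = n) (hPl : P (ℓ + 1) = 0)
    (hdegrec : ∀ i, i < ℓ → deg (i + 1) = (deg i) ^ 2)
    (hU : ∀ i, i ≤ ℓ → U i ≤ P i - P (i + 1) * (deg i + 1)) :
    ∑ i ∈ Finset.range (ℓ + 1), (P i + U i * (deg i - 1) - P (i + 1)) ≤ n * deg 0 := by
  set F : ℕ → ℝ := fun i => P i * (if i ≤ ℓ then deg i else (deg ℓ) ^ 2) with hF
  have key : ∀ i ∈ Finset.range (ℓ + 1),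
      P i + U i * (deg i - 1) - P (i + 1) ≤ F i - F (i + 1) := by
    intro i hi
    rw [Finset.mem_range] at hi
    have hile : i ≤ ℓ := Nat.lt_succ_iff.mp hi
    have hd := hdeg1 i hile
    have hUi := hU i hile
    have hFi : F i = P i * deg i := by simp [hF, hile]
    have hFi1 : F (i + 1) = P (i + 1) * (deg i) ^ 2 := by
      rcases lt_or_eq_of_le hile with h | h
      · simp [hF, Nat.succ_le_of_lt h, hdegrec i h]
      · subst h
        by_cases hc : i + 1 ≤ i
        · omega
        · simp [hF, hc]
    rw [hFi, hFi1]
    nlinarith [hPnn (i + 1), mul_le_mul_of_nonneg_right hUi (by linarith : (0:ℝ) ≤ deg i - 1)]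
  calc ∑ i ∈ Finset.range (ℓ + 1), (P i + U i * (deg i - 1) - P (i + 1))
      ≤ ∑ i ∈ Finset.range (ℓ + 1), (F i - F (i + 1)) := Finset.sum_le_sum key
    _ = F 0 - F (ℓ + 1) := Finset.sum_range_sub' F (ℓ + 1)
    _ ≤ F 0 := by
        have : F (ℓ + 1) = 0 := by simp [hF, hPl]
        linarith
    _ = n * deg 0 := by simp [hF, hP0]
end

section
/- If a greedy partition of a multiset of message counts (each count < 2d+2) into consecutive groups fills each group until its total is at most 4d+4, and merges the last group into the previous one if its total is below 2d+2, then every resulting group has total between 2d+2 and 6d+6 (provided the overall total is at least 2d+2). -/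
/-- Greedy grouping: add each item to the current group while the group's total
stays at most `cap`; otherwise close the group and start a new one. -/
def greedyAux (cap : ℕ) : List ℕ → List ℕ → List (List ℕ)
  | [], acc => [acc]
  | a :: rest, acc =>
    if acc.sum + a ≤ cap then greedyAux cap rest (acc ++ [a])
    else acc :: greedyAux cap rest [a]

/-- If the last group's total is below `lo`, merge it into the preceding group. -/
def mergeLast (lo : ℕ) (gs : List (List ℕ)) : List (List ℕ) :=
  match gs.reverse with
  | [] => []
  | [g] => [g]
  | g :: g' :: rest => if g.sum < lo then ((g' ++ g) :: rest).reverse else gs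

lemma greedy_sum (cap : ℕ) : ∀ (l acc : List ℕ),
    ((greedyAux cap l acc).map List.sum).sum = acc.sum + l.sum := by
  intro l
  induction l with
  | nil => intro acc; simp [greedyAux]
  | cons a rest ih =>
    intro acc
    rw [greedyAux]
    split
    · rw [ih]; simp; ring
    · simp [ih]

lemma greedy_struct (d : ℕ) : ∀ (l acc : List ℕ),
    (∀ a ∈ l, a < 2 * d + 2) → acc.sum ≤ 4 * d + 4 →
    ∃ t g, greedyAux (4 * d + 4) l acc = t ++ [g] ∧ g.sum ≤ 4 * d + 4 ∧
      ∀ x ∈ t, 2 * d + 2 ≤ x.sum ∧ x.sum ≤ 4 * d + 4 := by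
  intro l
  induction l with
  | nil => intro acc _ h; exact ⟨[], acc, rfl, h, by simp⟩
  | cons a rest ih =>
    intro acc hlt hacc
    rw [greedyAux]
    split
    case isTrue h =>
      exact ih (acc ++ [a]) (fun x hx => hlt x (by simp [hx])) (by simpa using h)
    case isFalse h =>
      have ha := hlt a (by simp)
      obtain ⟨t, g, heq, h1, h2⟩ := ih [a] (fun x hx => hlt x (by simp [hx])) (by simp; omega)
      refine ⟨acc :: t, g, by rw [heq]; rfl, h1, ?_⟩
      intro x hx
      rcases List.mem_cons.mp hx with rfl | hx
      · omega
      · exact h2 x hx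

theorem stmt_13 (d : ℕ) (l : List ℕ)
    (hpos : ∀ a ∈ l, 0 < a) (hlt : ∀ a ∈ l, a < 2 * d + 2)
    (hsum : 2 * d + 2 ≤ l.sum) :
    ∀ g ∈ mergeLast (2 * d + 2) (greedyAux (4 * d + 4) l []),
      2 * d + 2 ≤ g.sum ∧ g.sum ≤ 6 * d + 6 := by
  obtain ⟨t, g, heq, hg, ht⟩ := greedy_struct d l [] hlt (by simp)
  have hsum' := greedy_sum (4 * d + 4) l []
  rw [heq] at hsum'
  simp at hsum'
  intro x hx
  rw [heq] at hx
  cases htr : t.reverse with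
  | nil =>
    have ht0 : t = [] := List.reverse_eq_nil_iff.mp htr
    subst ht0
    have : mergeLast (2 * d + 2) ([] ++ [g]) = [g] := by
      unfold mergeLast
      rfl
    rw [this] at hx
    simp at hx
    subst hx
    simp at hsum'
    omega
  | cons g' r =>
    have hrev : (t ++ [g]).reverse = g :: g' :: r := by
      rw [List.reverse_append, htr]; rfl
    have hml : mergeLast (2 * d + 2) (t ++ [g]) =
        if g.sum < 2 * d + 2 then ((g' ++ g) :: r).reverse else t ++ [g] := by
      unfold mergeLast
      rw [hrev]
    rw [hml] at hx
    have hg' : g' ∈ t := by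
      have : g' ∈ t.reverse := by rw [htr]; simp
      exact List.mem_reverse.mp this
    split at hx
    case isTrue hc =>
      rw [List.mem_reverse] at hx
      rcases List.mem_cons.mp hx with rfl | hx
      · have := ht g' hg'
        rw [List.sum_append]
        omega
      · have hxt : x ∈ t := by
          have : x ∈ t.reverse := by rw [htr]; simp [hx]
          exact List.mem_reverse.mp this
        have := ht x hxt
        omega
    case isFalse hc =>
      rcases List.mem_append.mp hx with hx | hx
      · have := ht x hx; omega
      · simp at hx; subst hx; omega
end
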